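/- Let u : ℝ → ℝ be smooth and let (L_k[u])_{k≥0} be its Lenard sequence. Then for every k ≥ 0 and every z ∈ ℝ: (L_{k+1}[u])'(z) = (L_k[u])'''(z) + 4·u(z)·(L_k[u])'(z) + 2·u'(z)·L_k[u](z). -/

import Mathlib

/-- The Lenard sequence of a function `u : ℝ → ℝ`:
`L₀[u] = 1/2`, `L₁[u] = u`, and for `k ≥ 1`,
`L_{k+1}[u] = (L_k[u])'' + 3·L_k[u]·L₁[u]
  + ∑_{j=1}^{k-1} ( L_{k-j}[u]·(4·L₁[u]·L_j[u] - L_{j+1}[u] + 2·(L_j[u])'') - (L_j[u])'·(L_{k-j}[u])' )`. -/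
noncomputable def lenard (u : ℝ → ℝ) : ℕ → ℝ → ℝ
  | 0 => fun _ => 1 / 2
  | 1 => u
  | k + 2 => fun z =>
      deriv (deriv (lenard u (k + 1))) z
        + 3 * lenard u (k + 1) z * lenard u 1 z
        + ∑ j ∈ (Finset.range k).attach,
            (lenard u (k - j.1) z *
                (4 * lenard u 1 z * lenard u (j.1 + 1) z - lenard u (j.1 + 2) z
                  + 2 * deriv (deriv (lenard u (j.1 + 1))) z)
              - deriv (lenard u (j.1 + 1)) z * deriv (lenard u (k - j.1)) z)
  termination_by k => k
  decreasing_by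
    all_goals first
      | omega
      | (have h := j.2; simp only [Finset.mem_range] at h; omega)

open Finset

lemma lenard_sum_swap (x y : ℕ → ℝ) (k : ℕ) :
    ∑ j ∈ range k, x (j+1) * y (k-j) = ∑ j ∈ range k, y (j+1) * x (k-j) := by
  calc ∑ j ∈ range k, x (j+1) * y (k-j)
      = ∑ j ∈ range k, y (k-1-j+1) * x (k-(k-1-j)) := by
        apply Finset.sum_congr rfl
        intro j hj
        have hj' : j < k := Finset.mem_range.mp hj
        have e1 : k - 1 - j + 1 = k - j := by omega
        have e2 : k - (k - 1 - j) = j + 1 := by omega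
        rw [e1, e2]; ring
    _ = ∑ j ∈ range k, y (j+1) * x (k-j) :=
        Finset.sum_range_reflect (fun j => y (j+1) * x (k-j)) k

lemma lenard_sum_wronskian (x y : ℕ → ℝ) (k : ℕ) :
    ∑ j ∈ range k, (x (k-j) * y (j+2) - x (j+2) * y (k-j))
      = x 1 * y (k+1) - x (k+1) * y 1 := by
  cases k with
  | zero => simp
  | succ m =>
    rw [Finset.sum_range_succ]
    have hz : ∑ j ∈ range m, (x (m+1-j) * y (j+2) - x (j+2) * y (m+1-j)) = 0 := by
      have h1 : ∑ j ∈ range m, (x (m+1-j) * y (j+2) - x (j+2) * y (m+1-j))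
          = ∑ j ∈ range m, (x (m+1-(m-1-j)) * y ((m-1-j)+2) - x ((m-1-j)+2) * y (m+1-(m-1-j))) :=
        (Finset.sum_range_reflect (fun j => x (m+1-j) * y (j+2) - x (j+2) * y (m+1-j)) m).symm
      have h2 : ∑ j ∈ range m, (x (m+1-(m-1-j)) * y ((m-1-j)+2) - x ((m-1-j)+2) * y (m+1-(m-1-j)))
          = ∑ j ∈ range m, -(x (m+1-j) * y (j+2) - x (j+2) * y (m+1-j)) := by
        apply Finset.sum_congr rfl
        intro j hj
        have hj' : j < m := Finset.mem_range.mp hj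
        have e1 : m + 1 - (m-1-j) = j + 2 := by omega
        have e2 : m - 1 - j + 2 = m + 1 - j := by omega
        rw [e1, e2]; ring
      rw [h2, Finset.sum_neg_distrib] at h1
      linarith
    have e3 : m + 1 - m = 1 := by omega
    rw [hz, e3, show m + 1 + 1 = m + 2 from rfl]
    ring

lemma lenard_sum_key (a b c d : ℕ → ℝ) (U V : ℝ) (k : ℕ)
    (hIH : ∀ j, j ≤ k → b (j+1) = d j + 4 * U * b j + 2 * V * a j)
    (hU : a 1 = U) (hV : b 1 = V) :
    ∑ j ∈ range k,
      (b (k-j) * (4 * U * a (j+1) - a (j+2) + 2 * c (j+1))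
        + a (k-j) * (4 * (V * a (j+1) + U * b (j+1)) - b (j+2) + 2 * d (j+1))
        - (c (j+1) * b (k-j) + b (j+1) * c (k-j)))
      = U * b (k+1) - V * a (k+1) := by
  have h1 : ∀ j ∈ range k,
      (b (k-j) * (4 * U * a (j+1) - a (j+2) + 2 * c (j+1))
        + a (k-j) * (4 * (V * a (j+1) + U * b (j+1)) - b (j+2) + 2 * d (j+1))
        - (c (j+1) * b (k-j) + b (j+1) * c (k-j)))
      = 4 * U * (a (j+1) * b (k-j) - b (j+1) * a (k-j))
        + (c (j+1) * b (k-j) - b (j+1) * c (k-j))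
        + (a (k-j) * b (j+2) - a (j+2) * b (k-j)) := by
    intro j hj
    have hj' : j < k := Finset.mem_range.mp hj
    have e : d (j+1) = b (j+2) - 4 * U * b (j+1) - 2 * V * a (j+1) := by
      have := hIH (j+1) (by omega); linarith
    rw [e]; ring
  rw [Finset.sum_congr rfl h1, Finset.sum_add_distrib, Finset.sum_add_distrib]
  have hA : ∑ j ∈ range k, (4 * U * (a (j+1) * b (k-j) - b (j+1) * a (k-j))) = 0 := by
    have : ∑ j ∈ range k, (a (j+1) * b (k-j) - b (j+1) * a (k-j)) = 0 := by
      rw [Finset.sum_sub_distrib, lenard_sum_swap a b]; ring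
    calc ∑ j ∈ range k, (4 * U * (a (j+1) * b (k-j) - b (j+1) * a (k-j)))
        = 4 * U * ∑ j ∈ range k, (a (j+1) * b (k-j) - b (j+1) * a (k-j)) :=
          (Finset.mul_sum _ _ _).symm
      _ = 0 := by rw [this]; ring
  have hB : ∑ j ∈ range k, (c (j+1) * b (k-j) - b (j+1) * c (k-j)) = 0 := by
    rw [Finset.sum_sub_distrib, lenard_sum_swap c b]; ring
  rw [hA, hB, lenard_sum_wronskian a b k, hU, hV]
  ring

private lemma lenard_zero' (u : ℝ → ℝ) : lenard u 0 = fun _ => 1/2 := by unfold lenard; rfl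

private lemma lenard_one' (u : ℝ → ℝ) : lenard u 1 = u := by unfold lenard; rfl

private lemma lenard_add_two' (u : ℝ → ℝ) (k : ℕ) : lenard u (k+2) = fun z =>
      deriv (deriv (lenard u (k + 1))) z
        + 3 * lenard u (k + 1) z * u z
        + ∑ j ∈ Finset.range k,
            (lenard u (k - j) z *
                (4 * u z * lenard u (j + 1) z - lenard u (j + 2) z
                  + 2 * deriv (deriv (lenard u (j + 1))) z)
              - deriv (lenard u (j + 1)) z * deriv (lenard u (k - j)) z) := by
  rw [lenard]
  funext z
  rw [lenard_one', Finset.sum_attach (Finset.range k) (fun j =>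
            (lenard u (k - j) z *
                (4 * u z * lenard u (j + 1) z - lenard u (j + 2) z
                  + 2 * deriv (deriv (lenard u (j + 1))) z)
              - deriv (lenard u (j + 1)) z * deriv (lenard u (k - j)) z))]

private lemma contDiff_deriv'' {f : ℝ → ℝ} (h : ContDiff ℝ (⊤:ℕ∞) f) :
    ContDiff ℝ (⊤:ℕ∞) (deriv f) := (contDiff_infty_iff_deriv.mp h).2

private lemma lenard_contDiff' (u : ℝ → ℝ) (hu : ContDiff ℝ (⊤:ℕ∞) u) :
    ∀ k, ContDiff ℝ (⊤:ℕ∞) (lenard u k) := by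
  intro k
  induction k using Nat.strong_induction_on with
  | _ k ih =>
    match k with
    | 0 => rw [lenard_zero']; exact contDiff_const
    | 1 => rw [lenard_one']; exact hu
    | (k+2) =>
      rw [lenard_add_two']
      have h1 : ContDiff ℝ (⊤:ℕ∞) (lenard u (k+1)) := ih (k+1) (by omega)
      refine ((contDiff_deriv'' (contDiff_deriv'' h1)).add
        ((contDiff_const.mul h1).mul hu)).add (ContDiff.sum fun j hj => ?_)
      have hjk : j < k := Finset.mem_range.mp hj
      have h2 : ContDiff ℝ (⊤:ℕ∞) (lenard u (k-j)) := ih (k-j) (by omega)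
      have h3 : ContDiff ℝ (⊤:ℕ∞) (lenard u (j+1)) := ih (j+1) (by omega)
      have h4 : ContDiff ℝ (⊤:ℕ∞) (lenard u (j+2)) := ih (j+2) (by omega)
      exact (h2.mul (((contDiff_const.mul hu).mul h3).sub h4 |>.add
        (contDiff_const.mul (contDiff_deriv'' (contDiff_deriv'' h3))))).sub
        ((contDiff_deriv'' h3).mul (contDiff_deriv'' h2))

/-- The Lenard sequence satisfies the **Lenard differential recursion**
`(L_{k+1}[u])' = (L_k[u])''' + 4 u (L_k[u])' + 2 u' L_k[u]`
(equations (1.2) and (2.3) of the paper), for any smooth `u : ℝ → ℝ`. -/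
theorem lenard_differential_recursion
    (u : ℝ → ℝ) (hu : ContDiff ℝ (⊤ : ℕ∞) u) :
    ∀ (k : ℕ) (z : ℝ),
      deriv (lenard u (k + 1)) z =
        deriv (deriv (deriv (lenard u k))) z
          + 4 * u z * deriv (lenard u k) z
          + 2 * deriv u z * lenard u k z := by
  have hu' : ContDiff ℝ (⊤:ℕ∞) u := hu.of_le (by simp)
  have hL : ∀ m, ContDiff ℝ (⊤:ℕ∞) (lenard u m) := lenard_contDiff' u hu'
  intro k
  induction k using Nat.strong_induction_on with
  | _ k ih =>
    cases k with
    | zero =>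
      intro z
      rw [lenard_one', lenard_zero']
      simp
      ring
    | succ k =>
      intro z
      have hD : ∀ (f : ℝ → ℝ), ContDiff ℝ (⊤:ℕ∞) f → HasDerivAt f (deriv f z) z :=
        fun f hf => (hf.differentiable (by simp)).differentiableAt.hasDerivAt
      have h0 : HasDerivAt u (deriv u z) z := hD u hu'
      have hm : ∀ m, HasDerivAt (lenard u m) (deriv (lenard u m) z) z :=
        fun m => hD _ (hL m)
      have hm' : ∀ m, HasDerivAt (deriv (lenard u m)) (deriv (deriv (lenard u m)) z) z :=
        fun m => hD _ (contDiff_deriv'' (hL m))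
      have hm'' : ∀ m, HasDerivAt (deriv (deriv (lenard u m)))
          (deriv (deriv (deriv (lenard u m))) z) z :=
        fun m => hD _ (contDiff_deriv'' (contDiff_deriv'' (hL m)))
      have HT : ∀ j ∈ Finset.range k, HasDerivAt
          (fun z => lenard u (k - j) z *
                (4 * u z * lenard u (j + 1) z - lenard u (j + 2) z
                  + 2 * deriv (deriv (lenard u (j + 1))) z)
              - deriv (lenard u (j + 1)) z * deriv (lenard u (k - j)) z)
          (deriv (lenard u (k-j)) z * (4 * u z * lenard u (j+1) z - lenard u (j+2) z
              + 2 * deriv (deriv (lenard u (j+1))) z)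
            + lenard u (k-j) z * (4 * (deriv u z * lenard u (j+1) z
                + u z * deriv (lenard u (j+1)) z)
              - deriv (lenard u (j+2)) z + 2 * deriv (deriv (deriv (lenard u (j+1)))) z)
            - (deriv (deriv (lenard u (j+1))) z * deriv (lenard u (k-j)) z
              + deriv (lenard u (j+1)) z * deriv (deriv (lenard u (k-j))) z)) z := by
        intro j hj
        refine HasDerivAt.congr_deriv
          (((hm (k-j)).mul ((((h0.const_mul 4).mul (hm (j+1))).sub (hm (j+2))).add
            ((hm'' (j+1)).const_mul 2))).sub ((hm' (j+1)).mul (hm' (k-j)))) ?_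
        simp only [Pi.add_apply, Pi.sub_apply, Pi.mul_apply]
        ring
      have K : HasDerivAt (fun z =>
          deriv (deriv (lenard u (k + 1))) z
            + 3 * lenard u (k + 1) z * u z
            + ∑ j ∈ Finset.range k,
                (lenard u (k - j) z *
                    (4 * u z * lenard u (j + 1) z - lenard u (j + 2) z
                      + 2 * deriv (deriv (lenard u (j + 1))) z)
                  - deriv (lenard u (j + 1)) z * deriv (lenard u (k - j)) z))
          (deriv (deriv (deriv (lenard u (k + 1)))) z
            + 3 * deriv (lenard u (k + 1)) z * u z
            + 3 * lenard u (k + 1) z * deriv u z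
            + ∑ j ∈ Finset.range k,
              (deriv (lenard u (k-j)) z * (4 * u z * lenard u (j+1) z - lenard u (j+2) z
                  + 2 * deriv (deriv (lenard u (j+1))) z)
                + lenard u (k-j) z * (4 * (deriv u z * lenard u (j+1) z
                    + u z * deriv (lenard u (j+1)) z)
                  - deriv (lenard u (j+2)) z + 2 * deriv (deriv (deriv (lenard u (j+1)))) z)
                - (deriv (deriv (lenard u (j+1))) z * deriv (lenard u (k-j)) z
                  + deriv (lenard u (j+1)) z * deriv (deriv (lenard u (k-j))) z))) z := by
        refine HasDerivAt.congr_deriv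
          (((hm'' (k+1)).add (((hm (k+1)).const_mul 3).mul h0)).add (HasDerivAt.fun_sum HT)) ?_
        ring
      have hIH : ∀ j, j ≤ k → deriv (lenard u (j+1)) z =
          deriv (deriv (deriv (lenard u j))) z + 4 * u z * deriv (lenard u j) z
            + 2 * deriv u z * lenard u j z :=
        fun j hj => ih j (by omega) z
      have hU : lenard u 1 z = u z := by rw [lenard_one']
      have hV : deriv (lenard u 1) z = deriv u z := by rw [lenard_one']
      have hs : ∑ j ∈ Finset.range k,
          (deriv (lenard u (k-j)) z * (4 * u z * lenard u (j+1) z - lenard u (j+2) z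
              + 2 * deriv (deriv (lenard u (j+1))) z)
            + lenard u (k-j) z * (4 * (deriv u z * lenard u (j+1) z
                + u z * deriv (lenard u (j+1)) z)
              - deriv (lenard u (j+2)) z + 2 * deriv (deriv (deriv (lenard u (j+1)))) z)
            - (deriv (deriv (lenard u (j+1))) z * deriv (lenard u (k-j)) z
              + deriv (lenard u (j+1)) z * deriv (deriv (lenard u (k-j))) z))
          = u z * deriv (lenard u (k+1)) z - deriv u z * lenard u (k+1) z :=
        lenard_sum_key (fun m => lenard u m z) (fun m => deriv (lenard u m) z)
          (fun m => deriv (deriv (lenard u m)) z)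
          (fun m => deriv (deriv (deriv (lenard u m))) z)
          (u z) (deriv u z) k hIH hU hV
      rw [show k + 1 + 1 = k + 2 from rfl, lenard_add_two' u k, K.deriv, hs]
      ring
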